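/- arXiv:1501.06862 — 3 statements merged into one kernel-verified Lean document; each statement's English description precedes it below -/
import Mathlib

section
/- Let C ∈ DH[t] be a monic generic motion polynomial of degree n, and let (M₁, …, Mₙ) be any tuple of monic irreducible quadratic polynomials in ℝ[t] such that C·C̄ = M₁·M₂⋯Mₙ. Then there exist h₁, …, hₙ ∈ DH such that C = (t − h₁)·(t − h₂)⋯(t − hₙ) and (t − hᵢ)·(t − h̄ᵢ) = Mᵢ for each i = 1, …, n. -/
open Polynomial
noncomputable section

/-- The dual quaternions: dual numbers over the real quaternions. -/
abbrev DH : Type := DualNumber (Quaternion ℝ)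

/-- Dual quaternion conjugation: the conjugate of `p + εq` is `p̄ + εq̄`. -/
def dconj (h : DH) : DH :=
  TrivSqZeroExt.inl (star (TrivSqZeroExt.fst h)) + TrivSqZeroExt.inr (star (TrivSqZeroExt.snd h))

/-- Coefficientwise conjugation of a dual quaternion polynomial. -/
def pconj (P : Polynomial DH) : Polynomial DH :=
  P.sum fun n a => Polynomial.monomial n (dconj a)

/-- The quaternion unit i. -/
def qi : Quaternion ℝ := ⟨0,1,0,0⟩
/-- The quaternion unit j. -/
def qj : Quaternion ℝ := ⟨0,0,1,0⟩
/-- The quaternion unit k. -/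
def qk : Quaternion ℝ := ⟨0,0,0,1⟩

/-- A dual quaternion polynomial is real if all its coefficients are real scalars. -/
def IsRealPoly (P : Polynomial DH) : Prop :=
  ∃ r : Polynomial ℝ, P = r.map (algebraMap ℝ DH)

/-- The primal part of a dual quaternion polynomial. -/
def primalPart (C : Polynomial DH) : Polynomial (Quaternion ℝ) :=
  C.sum fun n a => Polynomial.monomial n (TrivSqZeroExt.fst a)


/-- A motion polynomial: the leading coefficient is invertible and the norm
polynomial `C·C̄` is real. -/
def IsMotionPoly (C : Polynomial DH) : Prop :=
  IsUnit C.leadingCoeff ∧ IsRealPoly (C * pconj C)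

/-- `C = P + εQ` is generic if its primal part `P` has no nonconstant real factor. -/
def IsGeneric (C : Polynomial DH) : Prop :=
  ¬ ∃ r : Polynomial ℝ, 0 < r.natDegree ∧ r.map (algebraMap ℝ (Quaternion ℝ)) ∣ primalPart C

/-!
Induct on `n`, splitting off the last factor `m = Mₙ`. Division by the central monic
polynomial `m` gives `C = m D + R` with `R = a t + b`. Since `m ∣ C C̄`, also `m ∣ R R̄`, and
as `R R̄` has degree at most two, `R R̄ = m a ā`. Genericity makes `a` invertible: otherwise
comparing constant terms forces the primal part of `b` to vanish, and then `m` divides the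
primal part of `C`. Hence `R = a (t - h)` with `h = -a⁻¹ b`; cancelling `a` and `ā` in
`a (t - h)(t - h̄) ā = m a ā` gives `(t - h)(t - h̄) = m`, and because `h + h̄` is central,
`C = (D (t - h̄) + a)(t - h)`. The left factor is again monic and generic, with norm
polynomial `M₁ ⋯ Mₙ₋₁`.
-/

lemma Polynomial.commute_map_algebraMap {R A : Type*} [CommSemiring R] [Semiring A] [Algebra R A]
    (r : R[X]) (q : A[X]) : Commute (r.map (algebraMap R A)) q := by
  induction r using Polynomial.induction_on' with
  | add r s hr hs => rw [Polynomial.map_add]; exact hr.add_left hs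
  | monomial n c =>
    rw [map_monomial, ← C_mul_X_pow_eq_monomial, ← algebraMap_apply]
    exact (Algebra.commute_algebraMap_left c q).mul_left (commute_X_pow q n)

lemma Polynomial.Monic.eq_one_of_mul_eq_one {R : Type*} [Semiring R] {p q : R[X]} (hp : p.Monic)
    (h : p * q = 1) : p = 1 := by
  nontriviality R
  have hdeg := hp.natDegree_mul' (right_ne_zero_of_mul_eq_one h)
  rw [h, natDegree_one, eq_comm, add_eq_zero] at hdeg
  exact hp.natDegree_eq_zero.mp hdeg.1

open TrivSqZeroExt

section DualQuaternion

@[simp] lemma fst_dconj (x : DH) : fst (dconj x) = star (fst x) := by simp [dconj]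

@[simp] lemma snd_dconj (x : DH) : snd (dconj x) = star (snd x) := by simp [dconj]

@[simp] lemma fst_algebraMap_real (r : ℝ) :
    fst (algebraMap ℝ DH r) = algebraMap ℝ (Quaternion ℝ) r :=
  congrArg fst (algebraMap_eq_inl' ℝ (Quaternion ℝ) (Quaternion ℝ) r)

@[simp] lemma snd_algebraMap_real (r : ℝ) : snd (algebraMap ℝ DH r) = 0 :=
  congrArg snd (algebraMap_eq_inl' ℝ (Quaternion ℝ) (Quaternion ℝ) r)

@[simp] lemma dconj_zero : dconj 0 = 0 := by ext <;> simp

@[simp] lemma dconj_one : dconj 1 = 1 := by ext <;> simp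

@[simp] lemma dconj_add (x y : DH) : dconj (x + y) = dconj x + dconj y := by ext <;> simp

@[simp] lemma dconj_mul (x y : DH) : dconj (x * y) = dconj y * dconj x := by
  ext <;> simp [add_comm]

@[simp] lemma dconj_algebraMap (r : ℝ) : dconj (algebraMap ℝ DH r) = algebraMap ℝ DH r := by
  ext <;> simp [Quaternion.star_coe]

@[simp] lemma dconj_neg (x : DH) : dconj (-x) = -dconj x := by ext <;> simp

lemma IsUnit.dconj {x : DH} (hx : IsUnit x) : IsUnit (dconj x) := by
  rw [isUnit_iff_isUnit_fst, fst_dconj]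
  exact (isUnit_iff_isUnit_fst.mp hx).star

lemma commute_dconj_self (x : DH) : Commute (dconj x) x := by
  refine TrivSqZeroExt.ext (by simp [star_comm_self']) ?_
  ext <;> simp <;> ring

end DualQuaternion

section ConjugatePolynomial

@[simp] lemma coeff_pconj (P : DH[X]) (k : ℕ) : (pconj P).coeff k = dconj (P.coeff k) := by
  simp only [pconj, Polynomial.sum_def, finsetSum_coeff, coeff_monomial, Finset.sum_ite_eq']
  split_ifs with hk
  · rfl
  · rw [notMem_support_iff.mp hk, dconj_zero]

@[simp] lemma pconj_add (P Q : DH[X]) : pconj (P + Q) = pconj P + pconj Q := by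
  ext k : 1; simp

@[simp] lemma pconj_C (a : DH) : pconj (C a) = C (dconj a) := by
  ext k : 1; simp [coeff_C, apply_ite dconj]

@[simp] lemma pconj_X : pconj (X : DH[X]) = X := by
  ext k : 1; simp [coeff_X, apply_ite dconj]

lemma pconj_mul (P Q : DH[X]) : pconj (P * Q) = pconj Q * pconj P := by
  ext k : 1
  rw [coeff_pconj, coeff_mul, coeff_mul, ← Finset.Nat.sum_antidiagonal_swap]
  exact (map_sum (⟨⟨dconj, dconj_zero⟩, dconj_add⟩ : DH →+ DH) _ _).trans (by simp)

@[simp] lemma pconj_map_algebraMap (r : ℝ[X]) :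
    pconj (r.map (algebraMap ℝ DH)) = r.map (algebraMap ℝ DH) := by
  ext k : 1; simp [coeff_map]

lemma pconj_X_sub_C (h : DH) : pconj (X - C h) = X - C (dconj h) := by
  rw [sub_eq_add_neg, ← C_neg, pconj_add, pconj_X, pconj_C, dconj_neg, C_neg, ← sub_eq_add_neg]

lemma commute_X_sub_C_X_sub_C_dconj (h : DH) : Commute (X - C h) (X - C (dconj h)) :=
  (commute_X _).sub_left ((commute_X (C h)).symm.sub_right ((commute_dconj_self h).symm.map C))

lemma linear_mul_pconj (a b : DH) :
    (C a * X + C b) * pconj (C a * X + C b) =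
      C (a * dconj a) * X ^ 2 + C (a * dconj b + b * dconj a) * X + C (b * dconj b) := by
  have hX (c d : DH) : C c * X * C d = C (c * d) * X := by
    rw [mul_assoc, X_mul_C, ← mul_assoc, ← C_mul]
  simp only [pconj_add, pconj_mul, pconj_C, pconj_X, X_mul_C, add_mul, mul_add, ← mul_assoc, hX,
    ← C_mul, C_add]
  rw [mul_assoc _ X X, ← sq]
  abel

end ConjugatePolynomial

section PrimalPart

lemma primalPart_eq_map (P : DH[X]) :
    primalPart P =
      P.map (fstHom ℝ (Quaternion ℝ) (Quaternion ℝ) : DH →+* Quaternion ℝ) := by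
  ext k : 1
  simp only [primalPart, Polynomial.sum_def, finsetSum_coeff, coeff_monomial, Finset.sum_ite_eq',
    coeff_map]
  split_ifs with hk
  · rfl
  · simp [notMem_support_iff.mp hk]

lemma IsGeneric.of_mul {P Q : DH[X]} (h : IsGeneric (P * Q)) : IsGeneric P := by
  rintro ⟨r, hr, s, hs⟩
  refine h ⟨r, hr, s * primalPart Q, ?_⟩
  rw [primalPart_eq_map, Polynomial.map_mul, ← primalPart_eq_map, ← primalPart_eq_map, hs,
    mul_assoc]

end PrimalPart

section RightFactor

variable {m : ℝ[X]}

local notation "m̃" => m.map (algebraMap ℝ DH)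

lemma dvd_mul_pconj_modByMonic {P : DH[X]} (h : m̃ ∣ P * pconj P) :
    m̃ ∣ (P %ₘ m̃) * pconj (P %ₘ m̃) := by
  set R := P %ₘ m̃
  set D := P /ₘ m̃
  have hP : P = R + m̃ * D := (modByMonic_add_div P m̃).symm
  have hRR : R * pconj R =
      P * pconj P - (m̃ * (D * pconj R + D * pconj D * m̃) + R * pconj D * m̃) := by
    rw [hP, pconj_add, pconj_mul, pconj_map_algebraMap]
    simp only [add_mul, mul_add, mul_assoc]
    abel
  rw [hRR, ← (commute_map_algebraMap m (R * pconj D)).eq]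
  exact dvd_sub h (dvd_add (dvd_mul_right _ _) (dvd_mul_right _ _))

lemma linear_mul_pconj_eq_of_dvd (hm : m.Monic) (hm2 : m.natDegree = 2) {a b : DH}
    (hdvd : m̃ ∣ (C a * X + C b) * pconj (C a * X + C b)) :
    (C a * X + C b) * pconj (C a * X + C b) = m̃ * C (a * dconj a) := by
  have hm2' : m̃.natDegree = 2 := by rw [hm.natDegree_map, hm2]
  have e := eq_mul_leadingCoeff_of_monic_of_dvd_of_natDegree_le (hm.map _) hdvd
    (by rw [linear_mul_pconj, hm2']; exact natDegree_quadratic_le)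
  set f := ((C a * X + C b) * pconj (C a * X + C b)).leadingCoeff
  have hf : f = a * dconj a := by
    have h2 : (m̃ * C f).coeff 2 = f := by
      rw [coeff_mul_C, ← hm2', (hm.map _).coeff_natDegree, one_mul]
    rw [← h2, ← e, linear_mul_pconj, coeff_add, coeff_add, coeff_C_mul_X_pow, coeff_C_mul_X,
      coeff_C]
    simp
  rwa [hf] at e

lemma IsGeneric.isUnit_of_mul_add_linear {P D : DH[X]} (hgen : IsGeneric P)
    (hm : 0 < m.natDegree) {a b : DH}
    (hP : P = m̃ * D + (C a * X + C b))
    (hRR : (C a * X + C b) * pconj (C a * X + C b) = m̃ * C (a * dconj a)) : IsUnit a := by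
  rw [isUnit_iff_isUnit_fst, isUnit_iff_ne_zero]
  intro ha
  have hb : fst b = 0 := by simpa [ha] using congrArg (fun p => fst (coeff p 0)) hRR
  exact hgen ⟨m, hm, primalPart D, by simp [hP, primalPart_eq_map, ha, hb, Polynomial.map_map]⟩

lemma X_sub_C_mul_X_sub_C_dconj_eq {a h : DH} (ha : IsUnit a)
    (hRR : C a * (X - C h) * pconj (C a * (X - C h)) = m̃ * C (a * dconj a)) :
    (X - C h) * (X - C (dconj h)) = m̃ := by
  have key : C a * ((X - C h) * (X - C (dconj h))) * C (dconj a) = C a * m̃ * C (dconj a) := by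
    rw [← (commute_map_algebraMap m _).eq, mul_assoc m̃, ← C_mul, ← hRR, pconj_mul, pconj_C,
      pconj_X_sub_C]
    simp only [mul_assoc]
  exact (isUnit_C.mpr ha).mul_left_cancel ((isUnit_C.mpr ha.dconj).mul_right_cancel key)

lemma mul_pconj_mul_X_sub_C {h : DH} (P : DH[X]) (hquad : (X - C h) * (X - C (dconj h)) = m̃) :
    P * (X - C h) * pconj (P * (X - C h)) = P * pconj P * m̃ := by
  rw [pconj_mul, pconj_X_sub_C, mul_assoc P, ← mul_assoc (X - C h), hquad, ← mul_assoc,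
    mul_assoc P, (commute_map_algebraMap m _).eq, mul_assoc]

theorem exists_right_factor_X_sub_C {P : DH[X]} (hgen : IsGeneric P) (hm : m.Monic)
    (hm2 : m.natDegree = 2) (hdvd : m̃ ∣ P * pconj P) :
    ∃ h Q, P = Q * (X - C h) ∧ (X - C h) * (X - C (dconj h)) = m̃ := by
  obtain ⟨a, b, hR⟩ : ∃ a b, P %ₘ m̃ = C a * X + C b := by
    refine ⟨_, _, eq_X_add_C_of_degree_le_one (Order.le_of_lt_succ ?_)⟩
    have := degree_modByMonic_lt P (hm.map (algebraMap ℝ DH))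
    rwa [degree_eq_natDegree (hm.map _).ne_zero, hm.natDegree_map, hm2] at this
  have hP : P = m̃ * (P /ₘ m̃) + (C a * X + C b) := by rw [← hR, add_comm, modByMonic_add_div]
  have hRR := linear_mul_pconj_eq_of_dvd hm hm2 (hR ▸ dvd_mul_pconj_modByMonic hdvd)
  obtain ⟨u, rfl⟩ := hgen.isUnit_of_mul_add_linear (by omega) hP hRR
  set h := -(↑u⁻¹ * b : DH)
  have hlin : C (u : DH) * (X - C h) = C (u : DH) * X + C b := by
    rw [mul_sub, ← C_mul, mul_neg, Units.mul_inv_cancel_left, C_neg, sub_neg_eq_add]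
  rw [← hlin] at hP hRR
  have hquad := X_sub_C_mul_X_sub_C_dconj_eq u.isUnit hRR
  refine ⟨h, P /ₘ m̃ * (X - C (dconj h)) + C (u : DH), ?_, hquad⟩
  rw [add_mul, mul_assoc, ← (commute_X_sub_C_X_sub_C_dconj h).eq, hquad,
    ← (commute_map_algebraMap m _).eq]
  exact hP

end RightFactor

theorem generic_motion_polynomial_factorization_with_labels_general (n : ℕ) (C : Polynomial DH)
    (hmonic : C.Monic) (hgen : IsGeneric C)
    (M : Fin n → Polynomial ℝ)
    (hMmonic : ∀ i, (M i).Monic)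
    (hMdeg : ∀ i, (M i).natDegree = 2)
    (hnorm : C * pconj C = (List.ofFn fun i => (M i).map (algebraMap ℝ DH)).prod) :
    ∃ h : Fin n → DH,
      C = (List.ofFn fun i => X - Polynomial.C (h i)).prod ∧
      ∀ i, (X - Polynomial.C (h i)) * (X - Polynomial.C (dconj (h i))) =
        (M i).map (algebraMap ℝ DH) := by
  induction n generalizing C with
  | zero =>
    rw [List.ofFn_zero, List.prod_nil] at hnorm
    exact ⟨Fin.elim0, by simp [hmonic.eq_one_of_mul_eq_one hnorm], fun i => i.elim0⟩
  | succ n ih =>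
    rw [List.ofFn_succ', List.prod_concat] at hnorm
    obtain ⟨h, C', rfl, hquad⟩ := exists_right_factor_X_sub_C hgen (hMmonic (Fin.last n))
      (hMdeg _) ⟨_, hnorm.trans (commute_map_algebraMap _ _).symm.eq⟩
    have hnorm' :
        C' * pconj C' = (List.ofFn fun i => (M i.castSucc).map (algebraMap ℝ DH)).prod :=
      ((hMmonic _).map _).isRegular.right ((mul_pconj_mul_X_sub_C C' hquad).symm.trans hnorm)
    obtain ⟨h', rfl, hquad'⟩ := ih C' ((monic_X_sub_C h).of_mul_monic_right hmonic) hgen.of_mul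
      (fun i => M i.castSucc) (fun _ => hMmonic _) (fun _ => hMdeg _) hnorm'
    refine ⟨Fin.snoc h' h, ?_, Fin.lastCases ?_ fun i => ?_⟩
    · rw [List.ofFn_succ', List.prod_concat]
      simp
    · simpa using hquad
    · simpa using hquad' i

/-- Given a monic generic motion polynomial `C` of degree `n` and any ordered tuple
`(M₁, …, Mₙ)` of monic irreducible quadratic real polynomials with
`C·C̄ = M₁⋯Mₙ`, there is a factorization `C = (t-h₁)⋯(t-hₙ)` with
`(t-hᵢ)(t-h̄ᵢ) = Mᵢ` for each `i`. -/
theorem generic_motion_polynomial_factorization_with_labels (n : ℕ) (C : Polynomial DH)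
    (hmonic : C.Monic) (hdeg : C.natDegree = n)
    (hmotion : IsMotionPoly C) (hgen : IsGeneric C)
    (M : Fin n → Polynomial ℝ)
    (hMmonic : ∀ i, (M i).Monic) (hMirr : ∀ i, Irreducible (M i))
    (hMdeg : ∀ i, (M i).natDegree = 2)
    (hnorm : C * pconj C = (List.ofFn fun i => (M i).map (algebraMap ℝ DH)).prod) :
    ∃ h : Fin n → DH,
      C = (List.ofFn fun i => X - Polynomial.C (h i)).prod ∧
      ∀ i, (X - Polynomial.C (h i)) * (X - Polynomial.C (dconj (h i))) =
        (M i).map (algebraMap ℝ DH) :=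
  generic_motion_polynomial_factorization_with_labels_general n C hmonic hgen M hMmonic hMdeg hnorm
end
end

section
/- Let a ∈ ℝ with a > 0, and for arbitrary λ, μ ∈ ℝ set h₁ = k + ε(λ·i + (μ − a)·j) and h₂ = −k − ε(λ·i + μ·j). Then (t − h₁)·(t − h₂) = t² + 1 + ε(a·j·t + a·i); that is, the circular translation t² + 1 + ε(a·j·t + a·i) admits infinitely many factorizations into two linear factors. -/
open Polynomial
noncomputable section

/-!
With `h₁ = k + εu` and `h₂ = -k - εv`, centrality of `t` gives
`(t - h₁)(t - h₂) = t² - (h₁ + h₂) t + h₁h₂`. The primal parts cancel in the sum and multiply to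
`-k² = 1`, so only the dual parts of the two coefficients remain: `ε(v - u)` and `-ε(kv + uk)`.
For `u = λi + (μ - a)j`, `v = λi + μj` the parameters `λ, μ` drop out of both, since `k` anticommutes
with `i` and `j`, leaving `εaj` and `εai`.
-/

theorem X_sub_C_mul_X_sub_C {R : Type*} [Ring R] (a b : R) :
    (X - C a) * (X - C b) = X ^ 2 - C (a + b) * X + C (a * b) := by
  rw [sub_mul, mul_sub, mul_sub, ← sq, C_add, C_mul, (commute_X (C b)).eq]
  noncomm_ring

namespace DualNumber

open TrivSqZeroExt

variable {R : Type*} [Ring R]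

theorem inl_add_inr_mul_neg_inl_sub_inr (p u v : R) :
    (inl p + inr u : DualNumber R) * (-inl p - inr v) =
      inl (-(p * p)) + inr (-(p * v + u * p)) := by
  simp only [mul_sub, add_mul, mul_neg, inl_mul_inl, inl_mul_inr, inr_mul_inl, inr_mul_inr,
    smul_eq_mul, MulOpposite.smul_eq_mul_unop, MulOpposite.unop_op, inr_neg, inl_neg, inr_add]
  abel

theorem X_sub_C_mul_X_sub_C_of_mul_self_eq_neg_one {p : R} (hp : p * p = -1) (u v : R) :
    (X - C (inl p + inr u : DualNumber R)) * (X - C (-inl p - inr v)) =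
      X ^ 2 + 1 + C (inr (v - u)) * X + C (inr (-(p * v + u * p))) := by
  have hsum : (inl p + inr u : DualNumber R) + (-inl p - inr v) = -inr (v - u) := by
    rw [inr_sub]
    abel
  rw [X_sub_C_mul_X_sub_C, hsum, inl_add_inr_mul_neg_inl_sub_inr, hp, neg_neg, inl_one]
  simp only [C_add, C_neg, map_one, neg_mul]
  abel

end DualNumber

section QuaternionUnits

open scoped Quaternion

theorem qk_mul_qk : qk * qk = -1 := by
  ext <;> simp <;> simp [qk]

theorem qk_mul_qi : qk * qi = qj := by
  ext <;> simp <;> simp [qi, qj, qk]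

theorem qk_mul_qj : qk * qj = -qi := by
  ext <;> simp <;> simp [qi, qj, qk]

theorem qi_mul_qk : qi * qk = -qj := by
  ext <;> simp <;> simp [qi, qj, qk]

theorem qj_mul_qk : qj * qk = qi := by
  ext <;> simp <;> simp [qi, qj, qk]

end QuaternionUnits

theorem qk_mul_add_add_mul_qk (a lam mu : ℝ) :
    qk * (lam • qi + mu • qj) + (lam • qi + (mu - a) • qj) * qk = -(a • qi) := by
  simp only [mul_add, add_mul, mul_smul_comm, smul_mul_assoc, qk_mul_qi, qk_mul_qj, qi_mul_qk,
    qj_mul_qk]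
  module

theorem circular_translation_factorizations_general (a : ℝ) (lam mu : ℝ) :
    ((X : Polynomial DH) -
          Polynomial.C (TrivSqZeroExt.inl qk + TrivSqZeroExt.inr (lam • qi + (mu - a) • qj))) *
        (X -
          Polynomial.C (-(TrivSqZeroExt.inl qk) - TrivSqZeroExt.inr (lam • qi + mu • qj))) =
      (X : Polynomial DH) ^ 2 + 1 +
        Polynomial.C (TrivSqZeroExt.inr (a • qj)) * X +
        Polynomial.C (TrivSqZeroExt.inr (a • qi)) := by
  have hdiff : lam • qi + mu • qj - (lam • qi + (mu - a) • qj) = a • qj := by module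
  rw [DualNumber.X_sub_C_mul_X_sub_C_of_mul_self_eq_neg_one qk_mul_qk, hdiff,
    qk_mul_add_add_mul_qk, neg_neg]

/-- For every `λ, μ ∈ ℝ`, the dual quaternions `h₁ = k + ε(λ·i + (μ-a)·j)` and
`h₂ = -k - ε(λ·i + μ·j)` give a factorization `(t-h₁)(t-h₂)` of the circular
translation `t² + 1 + ε(a·j·t + a·i)`; in particular there are infinitely many
such factorizations. -/
theorem circular_translation_factorizations (a : ℝ) (ha : a > 0) (lam mu : ℝ) :
    ((X : Polynomial DH) -
          Polynomial.C (TrivSqZeroExt.inl qk + TrivSqZeroExt.inr (lam • qi + (mu - a) • qj))) *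
        (X -
          Polynomial.C (-(TrivSqZeroExt.inl qk) - TrivSqZeroExt.inr (lam • qi + mu • qj))) =
      (X : Polynomial DH) ^ 2 + 1 +
        Polynomial.C (TrivSqZeroExt.inr (a • qj)) * X +
        Polynomial.C (TrivSqZeroExt.inr (a • qi)) :=
  circular_translation_factorizations_general a lam mu
end
end

section
/- Set h₁ = i + j + ε(i − j), h₂ = 1 + ε(i + 3j − k), k₁ = 1 + ε(3i + j − k), k₂ = i + j − ε(i − j), all elements of DH. Then (t − h₁)·(t − h₂) = (t − k₁)·(t − k₂) in DH[t]. (Here h₁ and k₂ are rotation quaternions with parallel axes while h₂ and k₁ are translation quaternions; this double factorization corresponds to the coupler motion of an RPRP linkage.) -/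
open Polynomial
noncomputable section

/-! Since `t` is central, `(t - a)(t - b) = t² - (a + b)t + ab`, so both factorizations agree as
soon as `h₁ + h₂ = k₁ + k₂` and `h₁h₂ = k₁k₂`. The sums are equal by linearity; the primal parts
of the products are both `i + j`, and their dual parts agree because
`(3i + j - k)(i + j) - (i + j)(i + 3j - k) = 2(i - j)`. -/

namespace Polynomial

variable {R : Type*} [Ring R]

theorem X_sub_C_mul_X_sub_C (a b : R) :
    (X - C a) * (X - C b) = X ^ 2 - C (a + b) * X + C (a * b) := by
  simp only [sub_mul, mul_sub, ← C_mul, X_mul_C, C_add, add_mul, sq]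
  abel

theorem X_sub_C_mul_X_sub_C_eq_of_add_eq_of_mul_eq {a b c d : R} (hadd : a + b = c + d)
    (hmul : a * b = c * d) : (X - C a) * (X - C b) = (X - C c) * (X - C d) := by
  rw [X_sub_C_mul_X_sub_C, X_sub_C_mul_X_sub_C, hadd, hmul]

end Polynomial

/-- The double factorization `(t−h₁)(t−h₂) = (t−k₁)(t−k₂)` corresponding to the
coupler motion of an RPRP linkage, where `h₁ = i+j+ε(i−j)`, `h₂ = 1+ε(i+3j−k)`,
`k₁ = 1+ε(3i+j−k)`, `k₂ = i+j−ε(i−j)`. -/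
theorem rprp_double_factorization :
    ((X : Polynomial DH) -
        Polynomial.C (TrivSqZeroExt.inl (qi + qj) + TrivSqZeroExt.inr (qi - qj))) *
      (X - Polynomial.C (TrivSqZeroExt.inl 1 + TrivSqZeroExt.inr (qi + (3 : ℝ) • qj - qk))) =
    ((X : Polynomial DH) -
        Polynomial.C (TrivSqZeroExt.inl 1 + TrivSqZeroExt.inr ((3 : ℝ) • qi + qj - qk))) *
      (X - Polynomial.C (TrivSqZeroExt.inl (qi + qj) - TrivSqZeroExt.inr (qi - qj))) := by
  have hdual : ((3 : ℝ) • qi + qj - qk) * (qi + qj) - (qi + qj) * (qi + (3 : ℝ) • qj - qk) =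
      (2 : ℝ) • (qi - qj) := by
    ext <;> simp <;> simp [qi, qj, qk] <;> norm_num
  apply Polynomial.X_sub_C_mul_X_sub_C_eq_of_add_eq_of_mul_eq
  · ext : 1 <;> simp <;> module
  · ext : 1 <;> simp
    linear_combination (norm := module) -hdual
end
end
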